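/- Let p ∈ [0,1] with binary entropy H(p) ≥ 0.9. Then p ∈ [0.3, 0.7], and moreover (1 − H(p))/(p − 1/2)² ∈ [2, 3]. -/

import Mathlib

/-!
With `t = 2p - 1` one has `2 ln 2 · (1 - H(p)) = (1+t) ln (1+t) + (1-t) ln (1-t)`, an even
function with Taylor series `∑ t^(2k) / (k (2k-1)) = t² + t⁴/6 + t⁶/15 + …`. Comparing
derivatives from `0` gives `t² ≤ 2 ln 2 · (1 - H(p)) ≤ t² + t⁴/6 + t⁶/10`, the upper bound for
`|t| ≤ 1/2`. Now `H(p) ≥ 0.9` and the lower bound give `t² ≤ 0.2 ln 2 < 0.16`, i.e. `|t| ≤ 0.4`,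
and then `(1 - H(p))/(p - 1/2)²` lies between `2 / ln 2 ≈ 2.885` and
`2.885 · (1 + 0.14/6 + 0.14²/10) < 3`.
-/

/-- Binary Shannon entropy (base 2). -/
noncomputable def H2 (p : ℝ) : ℝ :=
  -(p * Real.logb 2 p) - (1 - p) * Real.logb 2 (1 - p)

open Real Set

noncomputable def entropyDeficit (t : ℝ) : ℝ :=
  (1 + t) * log (1 + t) + (1 - t) * log (1 - t)

theorem entropyDeficit_neg (t : ℝ) : entropyDeficit (-t) = entropyDeficit t := by
  simp only [entropyDeficit, sub_neg_eq_add, ← sub_eq_add_neg]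
  ring

theorem entropyDeficit_abs (t : ℝ) : entropyDeficit |t| = entropyDeficit t := by
  rcases abs_choice t with h | h <;> simp only [h, entropyDeficit_neg]

theorem continuous_entropyDeficit : Continuous entropyDeficit :=
  (continuous_mul_log.comp (continuous_const_add 1)).add
    (continuous_mul_log.comp (continuous_sub_left 1))

theorem hasDerivAt_entropyDeficit {t : ℝ} (ht : |t| < 1) :
    HasDerivAt entropyDeficit (log (1 + t) - log (1 - t)) t := by
  obtain ⟨h₁, h₂⟩ := abs_lt.mp ht
  have hp := (hasDerivAt_mul_log (by linarith : 1 + t ≠ 0)).comp t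
    ((hasDerivAt_id t).const_add 1)
  have hm := (hasDerivAt_mul_log (by linarith : 1 - t ≠ 0)).comp t
    ((hasDerivAt_id t).const_sub 1)
  exact (hp.add hm).congr_deriv (by ring)

theorem hasDerivAt_log_one_add_sub_log_one_sub {t : ℝ} (ht : |t| < 1) :
    HasDerivAt (fun x ↦ log (1 + x) - log (1 - x)) (2 / (1 - t ^ 2)) t := by
  obtain ⟨h₁, h₂⟩ := abs_lt.mp ht
  have hp₀ : 1 + t ≠ 0 := by linarith
  have hm₀ : 1 - t ≠ 0 := by linarith
  have hsq₀ : 1 - t ^ 2 ≠ 0 := by nlinarith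
  have hp := ((hasDerivAt_id t).const_add 1).log hp₀
  have hm := ((hasDerivAt_id t).const_sub 1).log hm₀
  refine (hp.sub hm).congr_deriv ?_
  simp only [id]
  field_simp
  ring

theorem two_mul_le_log_one_add_sub_log_one_sub {t : ℝ} (h₀ : 0 ≤ t) (h₁ : t < 1) :
    2 * t ≤ log (1 + t) - log (1 - t) := by
  have hs := hasSum_log_sub_log_of_abs_lt_one (abs_lt.mpr ⟨by linarith, h₁⟩)
  simpa using le_hasSum hs 0 fun k _ ↦ by positivity

theorem sq_le_entropyDeficit_of_mem_Icc : ∀ t ∈ Icc (0 : ℝ) 1, t ^ 2 ≤ entropyDeficit t := by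
  refine image_le_of_deriv_right_le_deriv_boundary (f' := fun x ↦ 2 * x)
    (B' := fun x ↦ log (1 + x) - log (1 - x)) (by fun_prop) (fun x _ ↦ ?_)
    (by simp [entropyDeficit]) continuous_entropyDeficit.continuousOn (fun x hx ↦ ?_)
    fun x hx ↦ two_mul_le_log_one_add_sub_log_one_sub hx.1 hx.2
  · exact (hasDerivAt_pow 2 x).hasDerivWithinAt.congr_deriv (by ring)
  · exact (hasDerivAt_entropyDeficit (abs_lt.mpr ⟨by linarith [hx.1], hx.2⟩)).hasDerivWithinAt

theorem sq_le_entropyDeficit {t : ℝ} (ht : |t| ≤ 1) : t ^ 2 ≤ entropyDeficit t := by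
  rw [← entropyDeficit_abs, ← sq_abs]
  exact sq_le_entropyDeficit_of_mem_Icc _ ⟨abs_nonneg t, ht⟩

theorem log_one_add_sub_log_one_sub_le :
    ∀ t ∈ Icc (0 : ℝ) (1 / 2),
      log (1 + t) - log (1 - t) ≤ 2 * t + 2 / 3 * t ^ 3 + 3 / 5 * t ^ 5 := by
  have hderiv : ∀ x ∈ Icc (0 : ℝ) (1 / 2),
      HasDerivAt (fun x ↦ log (1 + x) - log (1 - x)) (2 / (1 - x ^ 2)) x := fun x hx ↦
    hasDerivAt_log_one_add_sub_log_one_sub (abs_lt.mpr ⟨by linarith [hx.1], by linarith [hx.2]⟩)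
  refine image_le_of_deriv_right_le_deriv_boundary
    (fun x hx ↦ (hderiv x hx).continuousAt.continuousWithinAt)
    (fun x hx ↦ (hderiv x (Ico_subset_Icc_self hx)).hasDerivWithinAt)
    (B' := fun x ↦ 2 + 2 * x ^ 2 + 3 * x ^ 4) (by simp) (by fun_prop) (fun x _ ↦ ?_) ?_
  · exact ((hasDerivAt_id x).const_mul 2 |>.add ((hasDerivAt_pow 3 x).const_mul (2 / 3))
      |>.add ((hasDerivAt_pow 5 x).const_mul (3 / 5))).hasDerivWithinAt.congr_deriv (by ring)
  · intro x ⟨hx₀, hx₁⟩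
    have h : 0 < 1 - x ^ 2 := by nlinarith
    rw [div_le_iff₀ h]
    nlinarith [mul_nonneg (pow_nonneg hx₀ 4) (by nlinarith : (0 : ℝ) ≤ 1 - 3 * x ^ 2)]

theorem entropyDeficit_le_of_mem_Icc :
    ∀ t ∈ Icc (0 : ℝ) (1 / 2), entropyDeficit t ≤ t ^ 2 + t ^ 4 / 6 + t ^ 6 / 10 := by
  refine image_le_of_deriv_right_le_deriv_boundary (f' := fun x ↦ log (1 + x) - log (1 - x))
    (B' := fun x ↦ 2 * x + 2 / 3 * x ^ 3 + 3 / 5 * x ^ 5) continuous_entropyDeficit.continuousOn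
    (fun x hx ↦ ?_) (by simp [entropyDeficit]) (by fun_prop) (fun x _ ↦ ?_)
    fun x hx ↦ log_one_add_sub_log_one_sub_le x (Ico_subset_Icc_self hx)
  · exact (hasDerivAt_entropyDeficit
      (abs_lt.mpr ⟨by linarith [hx.1], by linarith [hx.2]⟩)).hasDerivWithinAt
  · exact ((hasDerivAt_pow 2 x).add ((hasDerivAt_pow 4 x).div_const 6)
      |>.add ((hasDerivAt_pow 6 x).div_const 10)).hasDerivWithinAt.congr_deriv (by ring)

theorem entropyDeficit_le {t : ℝ} (ht : |t| ≤ 1 / 2) :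
    entropyDeficit t ≤ t ^ 2 + t ^ 4 / 6 + t ^ 6 / 10 := by
  have h := entropyDeficit_le_of_mem_Icc |t| ⟨abs_nonneg t, ht⟩
  rwa [entropyDeficit_abs, sq_abs, (by decide : Even 4).pow_abs,
    (by decide : Even 6).pow_abs] at h

theorem mul_log_two_mul (x : ℝ) : x * log (2 * x) = x * log 2 + x * log x := by
  rcases eq_or_ne x 0 with rfl | hx
  · simp
  · rw [log_mul two_ne_zero hx, mul_add]

theorem one_sub_H2 (p : ℝ) : 1 - H2 p = entropyDeficit (2 * p - 1) / (2 * log 2) := by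
  have h₁ : 1 + (2 * p - 1) = 2 * p := by ring
  have h₂ : 1 - (2 * p - 1) = 2 * (1 - p) := by ring
  have hlog : log 2 ≠ 0 := (log_pos one_lt_two).ne'
  rw [entropyDeficit, h₁, h₂, mul_assoc, mul_assoc, mul_log_two_mul, mul_log_two_mul, H2,
    logb, logb]
  field_simp
  ring

theorem stmt4 (p : ℝ) (hp0 : 0 ≤ p) (hp1 : p ≤ 1) (hH : 0.9 ≤ H2 p) :
    p ∈ Set.Icc (0.3 : ℝ) 0.7 ∧
    2 * (p - 1/2)^2 ≤ 1 - H2 p ∧ 1 - H2 p ≤ 3 * (p - 1/2)^2 := by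
  have hdef := one_sub_H2 p
  set t := 2 * p - 1
  have hsq : (p - 1 / 2) ^ 2 = t ^ 2 / 4 := by ring
  have hlog₀ := log_two_gt_d9
  have hlog₁ := log_two_lt_d9
  have hsmall : entropyDeficit t ≤ 0.2 * log 2 := by
    have h : entropyDeficit t / (2 * log 2) ≤ 0.1 := by linarith
    rw [div_le_iff₀ (by positivity)] at h
    linarith
  have hlow : t ^ 2 ≤ entropyDeficit t :=
    sq_le_entropyDeficit (abs_le.mpr ⟨by linarith, by linarith⟩)
  have ht₂ : t ^ 2 ≤ 0.14 := by linarith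
  have ht : -0.4 ≤ t ∧ t ≤ 0.4 := abs_le_of_sq_le_sq' (by linarith) (by norm_num)
  have hup := entropyDeficit_le (t := t) (abs_le.mpr ⟨by linarith, by linarith⟩)
  refine ⟨⟨by linarith, by linarith⟩, ?_, ?_⟩
  · rw [hdef, hsq, le_div_iff₀ (by positivity)]
    nlinarith [mul_le_mul_of_nonneg_left hlog₁.le (sq_nonneg t)]
  · have ht₄ : t ^ 4 ≤ 0.14 * t ^ 2 := by nlinarith [sq_nonneg t]
    have ht₆ : t ^ 6 ≤ 0.0196 * t ^ 2 := by nlinarith [sq_nonneg t]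
    rw [hdef, hsq, div_le_iff₀ (by positivity)]
    nlinarith [mul_le_mul_of_nonneg_left hlog₀.le (sq_nonneg t)]
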